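/- arXiv:1901.05672 — 2 statements merged into one kernel-verified Lean document; each statement's English description precedes it below -/
import Mathlib

section
/- Fix p, n, d, N, the exercise indices σ_1 < ⋯ < σ_{N-1} ≤ n, and a parameter ℓ = (ℓ_1,…,ℓ_{N-1}) with ℓ_i ∈ ℝ^{A_{p,n}^{⊗d,σ_i}}. For z = (z_1,…,z_N) ∈ ℝ^N and g = (g_1,…,g_n) ∈ (ℝ^d)^n define the vector field F by F_N(ℓ,z,g) = z_N and F_k(ℓ,z,g) = z_k 1{z_k ≥ C_{p,n|σ_k}(ℓ_k; g)} + F_{k+1}(ℓ,z,g) 1{z_k < C_{p,n|σ_k}(ℓ_k; g)} for 1 ≤ k ≤ N−1. Then for every k = 1,…,N−1 and all parameters a, b, |F_k(a,z,g) − F_k(b,z,g)| ≤ (Σ_{i=k}^N |z_i|) · (Σ_{i=k}^{N-1} 1{ |z_i − C_{p,n|σ_i}(b_i; g)| ≤ |a_i − b_i| · ‖C_{p,n|σ_i}‖(g) }), where ‖C_{p,n|σ_i}‖(g) = sup_{|λ| = 1} |C_{p,n|σ_i}(λ; g)|. -/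
open MeasureTheory ProbabilityTheory Polynomial

noncomputable section

/-- Evaluation of the `m`-th probabilists' Hermite polynomial. -/
def hermiteFun (m : ℕ) (x : ℝ) : ℝ := Polynomial.aeval x (Polynomial.hermite m)

/-- Multivariate Hermite polynomial `H_α^{⊗d}(x₁,…,xₙ) = ∏_j ∏_i H_{α_i^j}(x_i^j)`. -/
def hermiteProd {n d : ℕ} (α : Fin n → Fin d → ℕ) (x : Fin n → Fin d → ℝ) : ℝ :=
  ∏ j : Fin d, ∏ i : Fin n, hermiteFun (α i j) (x i j)

/-- `α! = ∏_j ∏_i (α_i^j)!`. -/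
def mfact {n d : ℕ} (α : Fin n → Fin d → ℕ) : ℕ :=
  ∏ j : Fin d, ∏ i : Fin n, Nat.factorial (α i j)

/-- `|α|₁ = Σ_j Σ_i α_i^j`. -/
def mdeg {n d : ℕ} (α : Fin n → Fin d → ℕ) : ℕ :=
  ∑ j : Fin d, ∑ i : Fin n, α i j

/-- The index set `A_{p,n}^{⊗d,k}` of multi-indices of total degree at most `p`
vanishing after index `k` (0-based: `α_i^j = 0` whenever `k ≤ i`). -/
def idxSet (n d p k : ℕ) : Finset (Fin n → Fin d → ℕ) :=
  ((Finset.univ : Finset (Fin n → Fin d → Fin (p + 1))).image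
      (fun α => fun i j => ((α i j : ℕ)))).filter
    (fun α => mdeg α ≤ p ∧ ∀ i : Fin n, ∀ j : Fin d, k ≤ (i : ℕ) → α i j = 0)

/-- `C_{p,n|σ}(λ; g) = Σ_{α ∈ A_{p,n}^{⊗d,σ}} λ_α H_α^{⊗d}(g)`. -/
def chaosEval (n d p σ : ℕ) (l : (Fin n → Fin d → ℕ) → ℝ) (g : Fin n → Fin d → ℝ) : ℝ :=
  ∑ α ∈ idxSet n d p σ, l α * hermiteProd α g

/-- Euclidean distance of two coefficient vectors on `ℝ^{A}`,
`|a - b| = √(Σ_{α ∈ A} (a_α - b_α)²)`. -/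
def coeffDist {n d : ℕ} (A : Finset (Fin n → Fin d → ℕ))
    (a b : (Fin n → Fin d → ℕ) → ℝ) : ℝ :=
  Real.sqrt (∑ α ∈ A, (a α - b α) ^ 2)

/-- `‖C_{p,n|σ}‖(g) = sup_{|λ| = 1} |C_{p,n|σ}(λ; g)|`, the sup running over coefficient
vectors on `ℝ^{A_{p,n}^{⊗d,σ}}` of unit Euclidean norm. -/
def chaosOpNorm (n d p σ : ℕ) (g : Fin n → Fin d → ℝ) : ℝ :=
  ⨆ l : {l : (Fin n → Fin d → ℕ) → ℝ // coeffDist (idxSet n d p σ) l 0 = 1},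
    |chaosEval n d p σ l.1 g|

/-- The policy-iteration vector field, defined downward from maturity:
`polF n d p N σ ℓ z g m = F_{N-m}(ℓ, z, g)` where `F_N(ℓ,z,g) = z_N` and
`F_k(ℓ,z,g) = z_k 1{z_k ≥ C_{p,n|σ_k}(ℓ_k; g)} + F_{k+1}(ℓ,z,g) 1{z_k < C_{p,n|σ_k}(ℓ_k; g)}`. -/
def polF (n d p N : ℕ) (σ : ℕ → ℕ) (l : ℕ → (Fin n → Fin d → ℕ) → ℝ)
    (z : ℕ → ℝ) (g : Fin n → Fin d → ℝ) : ℕ → ℝ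
  | 0 => z N
  | (m + 1) =>
    if chaosEval n d p (σ (N - (m + 1))) (l (N - (m + 1))) g ≤ z (N - (m + 1)) then
      z (N - (m + 1))
    else polF n d p N σ l z g m

/-!
Each `F_k(ℓ, z, g)` is one of `z_k, …, z_N`, hence bounded by `Σ_{i=k}^N |z_i|`. Going down
from `k`, the fields for `a` and `b` agree until the first index `i` at which the stopping
decisions `C(a_i; g) ≤ z_i` and `C(b_i; g) ≤ z_i` disagree. Then `z_i` lies between the two
thresholds, so `|z_i − C(b_i; g)| ≤ |C(a_i − b_i; g)| ≤ |a_i − b_i| ‖C‖(g)`, the last step by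
rescaling `a_i − b_i` to a unit coefficient vector.
-/

lemma chaosEval_sub (n d p σ : ℕ) (a b : (Fin n → Fin d → ℕ) → ℝ) (g : Fin n → Fin d → ℝ) :
    chaosEval n d p σ a g - chaosEval n d p σ b g = chaosEval n d p σ (a - b) g := by
  simp only [chaosEval, Pi.sub_apply, sub_mul, Finset.sum_sub_distrib]

lemma chaosEval_smul (n d p σ : ℕ) (c : ℝ) (l : (Fin n → Fin d → ℕ) → ℝ)
    (g : Fin n → Fin d → ℝ) :
    chaosEval n d p σ (c • l) g = c * chaosEval n d p σ l g := by
  simp only [chaosEval, Pi.smul_apply, smul_eq_mul, Finset.mul_sum, mul_assoc]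

lemma coeffDist_eq_coeffDist_sub_zero {n d : ℕ} (A : Finset (Fin n → Fin d → ℕ))
    (a b : (Fin n → Fin d → ℕ) → ℝ) : coeffDist A a b = coeffDist A (a - b) 0 := by
  simp [coeffDist]

lemma coeffDist_smul_zero {n d : ℕ} (A : Finset (Fin n → Fin d → ℕ)) (c : ℝ)
    (l : (Fin n → Fin d → ℕ) → ℝ) : coeffDist A (c • l) 0 = |c| * coeffDist A l 0 := by
  simp only [coeffDist, Pi.smul_apply, Pi.zero_apply, sub_zero, smul_eq_mul, mul_pow,
    ← Finset.mul_sum]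
  rw [Real.sqrt_mul (sq_nonneg c), Real.sqrt_sq_eq_abs]

lemma abs_chaosEval_le_coeffDist_mul_sqrt (n d p σ : ℕ) (l : (Fin n → Fin d → ℕ) → ℝ)
    (g : Fin n → Fin d → ℝ) :
    |chaosEval n d p σ l g| ≤
      coeffDist (idxSet n d p σ) l 0 * √(∑ α ∈ idxSet n d p σ, hermiteProd α g ^ 2) := by
  rw [← Real.sqrt_sq_eq_abs, coeffDist, ← Real.sqrt_mul (Finset.sum_nonneg fun _ _ => sq_nonneg _)]
  simp only [Pi.zero_apply, sub_zero]
  exact Real.sqrt_le_sqrt (Finset.sum_mul_sq_le_sq_mul_sq _ _ _)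

lemma abs_chaosEval_le_chaosOpNorm (n d p σ : ℕ) (g : Fin n → Fin d → ℝ)
    {l : (Fin n → Fin d → ℕ) → ℝ} (hl : coeffDist (idxSet n d p σ) l 0 = 1) :
    |chaosEval n d p σ l g| ≤ chaosOpNorm n d p σ g := by
  refine le_ciSup (f := fun u : {u // coeffDist (idxSet n d p σ) u 0 = 1} =>
    |chaosEval n d p σ u.1 g|) ⟨√(∑ α ∈ idxSet n d p σ, hermiteProd α g ^ 2), ?_⟩ ⟨l, hl⟩
  rintro _ ⟨u, rfl⟩
  simpa [u.2] using abs_chaosEval_le_coeffDist_mul_sqrt n d p σ u.1 g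

lemma abs_chaosEval_le_coeffDist_mul_chaosOpNorm (n d p σ : ℕ)
    (l : (Fin n → Fin d → ℕ) → ℝ) (g : Fin n → Fin d → ℝ) :
    |chaosEval n d p σ l g| ≤ coeffDist (idxSet n d p σ) l 0 * chaosOpNorm n d p σ g := by
  set r := coeffDist (idxSet n d p σ) l 0
  have hr0 : 0 ≤ r := Real.sqrt_nonneg _
  rcases hr0.eq_or_lt with hr | hr
  · have h : |chaosEval n d p σ l g| ≤ r * _ := abs_chaosEval_le_coeffDist_mul_sqrt n d p σ l g
    rwa [← hr, zero_mul] at h ⊢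
  have hunit : coeffDist (idxSet n d p σ) (r⁻¹ • l) 0 = 1 := by
    rw [coeffDist_smul_zero, abs_inv, abs_of_pos hr, inv_mul_cancel₀ hr.ne']
  have := abs_chaosEval_le_chaosOpNorm n d p σ g hunit
  rwa [chaosEval_smul, abs_mul, abs_inv, abs_of_pos hr, inv_mul_le_iff₀ hr] at this

lemma abs_chaosEval_sub_le (n d p σ : ℕ) (a b : (Fin n → Fin d → ℕ) → ℝ)
    (g : Fin n → Fin d → ℝ) :
    |chaosEval n d p σ a g - chaosEval n d p σ b g| ≤
      coeffDist (idxSet n d p σ) a b * chaosOpNorm n d p σ g := by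
  rw [chaosEval_sub, coeffDist_eq_coeffDist_sub_zero]
  exact abs_chaosEval_le_coeffDist_mul_chaosOpNorm n d p σ (a - b) g

lemma abs_sub_le_abs_sub_of_not_iff {x c c' : ℝ} (h : ¬(c ≤ x ↔ c' ≤ x)) :
    |x - c'| ≤ |c - c'| := by
  grind

section PolicyField

variable (n d p N : ℕ) (σ : ℕ → ℕ) (z : ℕ → ℝ) (g : Fin n → Fin d → ℝ)

lemma polF_sub_eq_ite (l : ℕ → (Fin n → Fin d → ℕ) → ℝ) {k : ℕ} (hk : k < N) :
    polF n d p N σ l z g (N - k) =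
      if chaosEval n d p (σ k) (l k) g ≤ z k then z k
      else polF n d p N σ l z g (N - (k + 1)) := by
  obtain ⟨m, hm⟩ : ∃ m, N - k = m + 1 := ⟨N - k - 1, by omega⟩
  rw [hm, polF, show N - (m + 1) = k by omega, show N - (k + 1) = m by omega]

lemma abs_polF_le_sum (l : ℕ → (Fin n → Fin d → ℕ) → ℝ) (m : ℕ) :
    |polF n d p N σ l z g m| ≤ ∑ i ∈ Finset.Icc (N - m) N, |z i| := by
  induction m with
  | zero => simp [polF]
  | succ m ih =>
    rw [polF]
    split_ifs
    · exact Finset.single_le_sum (fun i _ => abs_nonneg (z i))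
        (Finset.mem_Icc.mpr ⟨le_rfl, Nat.sub_le _ _⟩)
    · exact ih.trans (Finset.sum_le_sum_of_subset_of_nonneg
        (Finset.Icc_subset_Icc_left (Nat.sub_le_sub_left m.le_succ N))
        (fun i _ _ => abs_nonneg _))

lemma abs_sub_polF_le_sum (l : ℕ → (Fin n → Fin d → ℕ) → ℝ) {k : ℕ} (hk : k < N) :
    |z k - polF n d p N σ l z g (N - (k + 1))| ≤ ∑ i ∈ Finset.Icc k N, |z i| := by
  have h := abs_polF_le_sum n d p N σ z g l (N - (k + 1))
  rw [show N - (N - (k + 1)) = k + 1 by omega, Finset.Icc_add_one_left_eq_Ioc] at h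
  rw [← Finset.add_sum_Ioc_eq_sum_Icc hk.le]
  exact (abs_sub _ _).trans (add_le_add_right h _)

def nearBoundaryCount (a b : ℕ → (Fin n → Fin d → ℕ) → ℝ) (k : ℕ) : ℝ :=
  ∑ i ∈ Finset.Icc k (N - 1),
    if |z i - chaosEval n d p (σ i) (b i) g| ≤
        coeffDist (idxSet n d p (σ i)) (a i) (b i) * chaosOpNorm n d p (σ i) g
      then (1 : ℝ) else 0

variable (a b : ℕ → (Fin n → Fin d → ℕ) → ℝ)

lemma nearBoundaryCount_nonneg (k : ℕ) : 0 ≤ nearBoundaryCount n d p N σ z g a b k :=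
  Finset.sum_nonneg fun _ _ => by split_ifs <;> norm_num

lemma nearBoundaryCount_antitone : Antitone (nearBoundaryCount n d p N σ z g a b) :=
  fun _ _ hkj => Finset.sum_le_sum_of_subset_of_nonneg (Finset.Icc_subset_Icc_left hkj)
    fun _ _ _ => by split_ifs <;> norm_num

lemma one_le_nearBoundaryCount {k : ℕ} (hk : k ≤ N - 1)
    (h : |z k - chaosEval n d p (σ k) (b k) g| ≤
      coeffDist (idxSet n d p (σ k)) (a k) (b k) * chaosOpNorm n d p (σ k) g) :
    1 ≤ nearBoundaryCount n d p N σ z g a b k := by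
  refine le_of_eq_of_le (if_pos h).symm (Finset.single_le_sum (f := fun i =>
    if |z i - chaosEval n d p (σ i) (b i) g| ≤
        coeffDist (idxSet n d p (σ i)) (a i) (b i) * chaosOpNorm n d p (σ i) g
      then (1 : ℝ) else 0) (fun _ _ => by split_ifs <;> norm_num) ?_)
  exact Finset.mem_Icc.mpr ⟨le_rfl, hk⟩

theorem abs_polF_sub_polF_le (k : ℕ) :
    |polF n d p N σ a z g (N - k) - polF n d p N σ b z g (N - k)| ≤
      (∑ i ∈ Finset.Icc k N, |z i|) * nearBoundaryCount n d p N σ z g a b k := by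
  have hz (k : ℕ) : 0 ≤ ∑ i ∈ Finset.Icc k N, |z i| := Finset.sum_nonneg fun _ _ => abs_nonneg _
  have hcount := nearBoundaryCount_nonneg n d p N σ z g a b
  induction hm : N - k generalizing k with
  | zero => simpa [polF] using mul_nonneg (hz k) (hcount k)
  | succ m ih =>
    have hk : k < N := by omega
    have hC := abs_chaosEval_sub_le n d p (σ k) (a k) (b k) g
    rw [← hm, polF_sub_eq_ite n d p N σ z g a hk, polF_sub_eq_ite n d p N σ z g b hk]
    split_ifs with ha hb hb
    · simpa using mul_nonneg (hz k) (hcount k)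
    · refine (abs_sub_polF_le_sum n d p N σ z g b hk).trans (le_mul_of_one_le_right (hz k) ?_)
      exact one_le_nearBoundaryCount n d p N σ z g a b (by omega)
        ((abs_sub_le_abs_sub_of_not_iff fun h => hb (h.mp ha)).trans hC)
    · rw [abs_sub_comm]
      refine (abs_sub_polF_le_sum n d p N σ z g a hk).trans (le_mul_of_one_le_right (hz k) ?_)
      exact one_le_nearBoundaryCount n d p N σ z g a b (by omega)
        ((abs_sub_le_abs_sub_of_not_iff fun h => ha (h.mpr hb)).trans hC)
    · rw [show N - (k + 1) = m by omega]
      refine (ih (k + 1) (by omega)).trans (mul_le_mul ?_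
        (nearBoundaryCount_antitone n d p N σ z g a b k.le_succ) (hcount _) (hz k))
      exact Finset.sum_le_sum_of_subset_of_nonneg (Finset.Icc_subset_Icc_left k.le_succ)
        fun _ _ _ => abs_nonneg _

end PolicyField

theorem polF_lipschitz_general
    (n d p N : ℕ) (σ : ℕ → ℕ)
    (k : ℕ)
    (a b : ℕ → (Fin n → Fin d → ℕ) → ℝ) (z : ℕ → ℝ) (g : Fin n → Fin d → ℝ) :
    |polF n d p N σ a z g (N - k) - polF n d p N σ b z g (N - k)| ≤
      (∑ i ∈ Finset.Icc k N, |z i|) *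
        (∑ i ∈ Finset.Icc k (N - 1),
          if |z i - chaosEval n d p (σ i) (b i) g| ≤
              coeffDist (idxSet n d p (σ i)) (a i) (b i) * chaosOpNorm n d p (σ i) g
            then (1 : ℝ) else 0) :=
  abs_polF_sub_polF_le n d p N σ z g a b k

/-- Key Lipschitz-type lemma for the policy-iteration vector field: for every
`k = 1,…,N−1` and all coefficient parameters `a, b`,
`|F_k(a,z,g) − F_k(b,z,g)| ≤ (Σ_{i=k}^N |z_i|) ⬝
(Σ_{i=k}^{N-1} 1{|z_i − C_{p,n|σ_i}(b_i; g)| ≤ |a_i − b_i| ⬝ ‖C_{p,n|σ_i}‖(g)})`. -/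
theorem polF_lipschitz
    (n d p N : ℕ) (σ : ℕ → ℕ)
    (hσmono : ∀ i j : ℕ, 1 ≤ i → i < j → j ≤ N - 1 → σ i < σ j)
    (hσn : ∀ i : ℕ, 1 ≤ i → i ≤ N - 1 → σ i ≤ n)
    (k : ℕ) (hk1 : 1 ≤ k) (hkN : k ≤ N - 1)
    (a b : ℕ → (Fin n → Fin d → ℕ) → ℝ) (z : ℕ → ℝ) (g : Fin n → Fin d → ℝ) :
    |polF n d p N σ a z g (N - k) - polF n d p N σ b z g (N - k)| ≤
      (∑ i ∈ Finset.Icc k N, |z i|) *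
        (∑ i ∈ Finset.Icc k (N - 1),
          if |z i - chaosEval n d p (σ i) (b i) g| ≤
              coeffDist (idxSet n d p (σ i)) (a i) (b i) * chaosOpNorm n d p (σ i) g
            then (1 : ℝ) else 0) :=
  polF_lipschitz_general n d p N σ k a b z g

end
end

section
/- With p, n fixed, let Λ = (λ_1,…,λ_{N-1}) be the chaos coefficients of the backward policy iteration, i.e. λ_{k,α} = (1/α!) E[F_{k+1}(Λ, Z, G) H_α^{⊗d}(G)] for α ∈ A_{p,n}^{⊗d,σ_k}, and let Λ̂^M = (λ̂_1^M,…,λ̂_{N-1}^M) be its Monte Carlo approximation computed from M i.i.d. sample paths (Z^{(m)}, G^{(m)}) via λ̂_{k,α}^M = (1/(M α!)) Σ_{ℓ=1}^M F_{k+1}(Λ̂^M, Z^{(ℓ)}, G^{(ℓ)}) H_α^{⊗d}(G^{(ℓ)}) computed backward in k. Assume that for every k = 1,…,N, ℙ(Z_{T_k} ∈ 𝓒_{p,n|σ_k}) = 0, i.e. almost surely Z_{T_k} ≠ C_{p,n|σ_k}(λ_k). Then for every k = 1,…,N−1, λ̂_k^M converges to λ_k almost surely as M → ∞. -/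
open MeasureTheory ProbabilityTheory Polynomial

noncomputable section

variable {Ω : Type*}

/-- Coefficient `λ_α = (1/α!) E[F ⬝ H_α^{⊗d}(G)]` of the Wiener chaos expansion. -/
def chaosCoeff [MeasurableSpace Ω] (P : Measure Ω) {n d : ℕ} (G : Fin n → Ω → Fin d → ℝ)
    (F : Ω → ℝ) (α : Fin n → Fin d → ℕ) : ℝ :=
  ((mfact α : ℝ))⁻¹ * ∫ ω, F ω * hermiteProd α (fun i => G i ω) ∂P

/-- `C_{p,n|k}(F) = Σ_{α ∈ A_{p,n}^{⊗d,k}} λ_α H_α^{⊗d}(G)`; for `k = n` this is the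
truncated chaos expansion `C_{p,n}(F)`. -/
def chaosCE [MeasurableSpace Ω] (P : Measure Ω) {n d : ℕ} (G : Fin n → Ω → Fin d → ℝ)
    (p k : ℕ) (F : Ω → ℝ) (ω : Ω) : ℝ :=
  ∑ α ∈ idxSet n d p k, chaosCoeff P G F α * hermiteProd α (fun i => G i ω)

/-- A `d`-dimensional Brownian motion in law. -/
structure IsBrownian [MeasurableSpace Ω] (P : Measure Ω) (d : ℕ)
    (B : ℝ → Ω → Fin d → ℝ) : Prop where
  meas : ∀ t, Measurable (B t)
  start : ∀ᵐ ω ∂P, B 0 ω = 0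
  cont : ∀ ω, Continuous fun t => B t ω
  indep : ∀ (m : ℕ) (t : ℕ → ℝ), Monotone t → 0 ≤ t 0 →
    iIndepFun
      (fun (q : Fin m × Fin d) => fun ω => B (t (q.1 + 1)) ω q.2 - B (t q.1) ω q.2) P
  gauss : ∀ s u : ℝ, 0 ≤ s → s ≤ u → ∀ j : Fin d,
    P.map (fun ω => B u ω j - B s ω j) = gaussianReal 0 (Real.toNNReal (u - s))

/-- The natural filtration `𝓕_t` of the Brownian motion `B`. -/
def natFilt [MeasurableSpace Ω] {d : ℕ} (B : ℝ → Ω → Fin d → ℝ) (t : ℝ) :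
    MeasurableSpace Ω :=
  ⨆ s : {s : ℝ // 0 ≤ s ∧ s ≤ t}, MeasurableSpace.comap (B s) inferInstance

/-- Normalized increments `G_i = (B_{t_i} - B_{t_{i-1}})/√(t_i - t_{i-1})` of `B`
on the grid `t`. -/
def gridIncr {d : ℕ} (B : ℝ → Ω → Fin d → ℝ) {n : ℕ} (t : Fin (n + 1) → ℝ)
    (i : Fin n) (ω : Ω) (j : Fin d) : ℝ :=
  (B (t i.succ) ω j - B (t i.castSucc) ω j) / Real.sqrt (t i.succ - t i.castSucc)

/-- Backward construction of the Monte-Carlo coefficient estimators: `lamHatAux … M j`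
defines the coefficients for the `j` top indices `k = N-1, …, N-j` (and `0` elsewhere),
via `λ̂_{k,α}^M = (1/(M α!)) Σ_{ℓ<M} F_{k+1}(λ̂^M, z^{(ℓ)}, g^{(ℓ)}) H_α^{⊗d}(g^{(ℓ)})`,
computed backward in `k`. -/
def lamHatAux (n d p N : ℕ) (σ : ℕ → ℕ) (zs : ℕ → ℕ → ℝ)
    (gs : ℕ → Fin n → Fin d → ℝ) (M : ℕ) : ℕ → ℕ → (Fin n → Fin d → ℕ) → ℝ
  | 0 => fun _ _ => 0
  | (j + 1) => fun k α =>
    if k = N - 1 - j then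
      ((M : ℝ) * (mfact α : ℝ))⁻¹ *
        ∑ m ∈ Finset.range M,
          polF n d p N σ (lamHatAux n d p N σ zs gs M j) (zs m) (gs m) (N - (k + 1)) *
            hermiteProd α (gs m)
    else lamHatAux n d p N σ zs gs M j k α

/-- The Monte-Carlo approximation `Λ̂^M` of the chaos coefficients of the backward
policy iteration, computed from the `M` sample paths `(zs, gs)`. -/
def lamHat (n d p N : ℕ) (σ : ℕ → ℕ) (zs : ℕ → ℕ → ℝ)
    (gs : ℕ → Fin n → Fin d → ℝ) (M : ℕ) : ℕ → (Fin n → Fin d → ℕ) → ℝ :=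
  lamHatAux n d p N σ zs gs M (N - 1)

/-!
The estimators are built backward, so argue by downward induction on `k`. At step `k`,
`λ̂_k^M` is `1/α!` times the empirical mean of `F_{k+1}(Λ̂^M, ·) H_α`, and by the strong law of
large numbers the empirical means of `F_{k+1}(Λ, ·) H_α` converge to `α! λ_k`; so it suffices
that replacing `Λ` by `Λ̂^M` costs `o(1)` on average. Once the later coefficients are within `q`
of `Λ`, the two cash flows can differ only on samples where some payoff `Z_{T_i}` lies within
`O(q)` of its threshold `C(λ_i)`, and there by at most `2 max_i |Z_{T_i}| |H_α|`, which is
integrable since `max_i |Z_{T_i}| ∈ L²` and Hermite polynomials of Gaussians have all moments.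
As `q → 0` these sets shrink to the null sets `{Z_{T_i} = C(λ_i)}`, so dominated convergence and
a second use of the strong law make the error vanish.
-/

open Filter Topology Finset

lemma le_iff_le_of_abs_sub_lt {a b z : ℝ} (h : |a - b| < |z - b|) : a ≤ z ↔ b ≤ z := by
  constructor <;> intro hz <;> cases abs_cases (a - b) <;> cases abs_cases (z - b) <;> linarith

lemma tendsto_average_of_eventually_abs_sub_le {u y : ℕ → ℕ → ℝ} {v c : ℕ → ℝ} {L : ℝ}
    (hv : Tendsto (fun M : ℕ => (M : ℝ)⁻¹ * ∑ m ∈ range M, v m) atTop (𝓝 L))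
    (hy : ∀ r, Tendsto (fun M : ℕ => (M : ℝ)⁻¹ * ∑ m ∈ range M, y r m) atTop (𝓝 (c r)))
    (hc : Tendsto c atTop (𝓝 0)) (huv : ∀ r, ∀ᶠ M in atTop, ∀ m, |u M m - v m| ≤ y r m) :
    Tendsto (fun M : ℕ => (M : ℝ)⁻¹ * ∑ m ∈ range M, u M m) atTop (𝓝 L) := by
  rw [Metric.tendsto_nhds]
  intro ε hε
  obtain ⟨r, hr⟩ := (hc.eventually (gt_mem_nhds (show (0 : ℝ) < ε / 3 by positivity))).exists
  filter_upwards [huv r, Metric.tendsto_nhds.1 hv (ε / 3) (by positivity),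
    Metric.tendsto_nhds.1 (hy r) (ε / 3) (by positivity)] with M hM hvM hyM
  rw [Real.dist_eq] at hvM hyM ⊢
  have hdiff : |(M : ℝ)⁻¹ * ∑ m ∈ range M, u M m - (M : ℝ)⁻¹ * ∑ m ∈ range M, v m| ≤
      (M : ℝ)⁻¹ * ∑ m ∈ range M, y r m := by
    rw [← mul_sub, ← sum_sub_distrib, abs_mul, abs_of_nonneg (by positivity)]
    gcongr
    exact (abs_sum_le_sum_abs _ _).trans (sum_le_sum fun m _ => hM m)
  have := abs_sub_lt_iff.1 hyM
  have := abs_sub_le ((M : ℝ)⁻¹ * ∑ m ∈ range M, u M m) ((M : ℝ)⁻¹ * ∑ m ∈ range M, v m) L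
  linarith

lemma iSup_abs_eq_norm {ι : Type*} [Fintype ι] (f : ι → ℝ) : ⨆ i, |f i| = ‖f‖ :=
  le_antisymm (Real.iSup_le (fun i => (Real.norm_eq_abs (f i)).symm ▸ norm_le_pi_norm f i)
      (norm_nonneg f))
    ((pi_norm_le_iff_of_nonneg (Real.iSup_nonneg fun i => abs_nonneg (f i))).2 fun i =>
      le_ciSup (f := fun i => |f i|) (Set.finite_range _).bddAbove i)

section Moments

open scoped ENNReal

variable {α : Type*} [MeasurableSpace α] {μ : Measure α}

lemma memLp_finset_prod_of_forall [IsFiniteMeasure μ] {ι : Type*} {s : Finset ι}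
    {f : ι → α → ℝ} (hf : ∀ i ∈ s, ∀ q : ℝ≥0∞, q ≠ ∞ → MemLp (f i) q μ)
    {q : ℝ≥0∞} (hq : q ≠ ∞) : MemLp (fun x => ∏ i ∈ s, f i x) q μ := by
  rcases s.eq_empty_or_nonempty with rfl | hs
  · simpa using memLp_const (1 : ℝ)
  have hcard : (#s : ℝ≥0∞) ≠ 0 := by simpa using hs.card_pos.ne'
  -- Hölder with `#s` equal exponents `#s * q`
  convert MemLp.prod' (p := fun _ => #s * q) fun i hi =>
    hf i hi _ (ENNReal.mul_ne_top (ENNReal.natCast_ne_top _) hq)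
  rw [sum_const, nsmul_eq_mul, ENNReal.mul_inv (Or.inl hcard) (Or.inl (ENNReal.natCast_ne_top _)),
    inv_inv, ← mul_assoc, ENNReal.inv_mul_cancel hcard (ENNReal.natCast_ne_top _), one_mul]

lemma memLp_aeval_gaussianReal {R : Type*} [CommSemiring R] [Algebra R ℝ] (Q : Polynomial R)
    {m : ℝ} {v : NNReal} {q : ℝ≥0∞} (hq : q ≠ ∞) :
    MemLp (fun x => Polynomial.aeval x Q) q (gaussianReal m v) := by
  simp_rw [Polynomial.aeval_eq_sum_range, Algebra.smul_def]
  refine memLp_finsetSum (f := fun i x => algebraMap R ℝ (Q.coeff i) * x ^ i) _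
    fun i _ => MemLp.const_mul ?_ _
  have hpow : MemLp (fun x : ℝ => ∏ _j ∈ range i, id x) q (gaussianReal m v) :=
    memLp_finset_prod_of_forall (fun _ _ q hq => memLp_id_gaussianReal' q hq) hq
  simpa only [prod_const, card_range, id] using hpow

lemma memLp_hermiteProd [IsFiniteMeasure μ] {n d : ℕ} {G : α → Fin n → Fin d → ℝ}
    (hG : ∀ i j, Measurable fun x => G x i j)
    (hgauss : ∀ i j, μ.map (fun x => G x i j) = gaussianReal 0 1)
    (β : Fin n → Fin d → ℕ) {q : ℝ≥0∞} (hq : q ≠ ∞) :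
    MemLp (fun x => hermiteProd β (G x)) q μ :=
  memLp_finset_prod_of_forall (fun j _ _ hq => memLp_finset_prod_of_forall (fun i _ _ hq =>
    (memLp_map_measure_iff (Polynomial.hermite _).continuous_aeval.aestronglyMeasurable
      (hG i j).aemeasurable).1 (hgauss i j ▸ memLp_aeval_gaussianReal _ hq)) hq) hq

end Moments

lemma ae_tendsto_average_of_iIndepFun {Ω E : Type*} [MeasurableSpace Ω] {P : Measure Ω}
    [IsProbabilityMeasure P] [MeasurableSpace E] {W : ℕ → Ω → E} (hW : ∀ m, Measurable (W m))
    (hindep : iIndepFun W P) {ν : Measure E} (hlaw : ∀ m, P.map (W m) = ν) {f : E → ℝ}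
    (hf : Measurable f) (hint : Integrable f ν) :
    ∀ᵐ ω ∂P, Tendsto (fun M : ℕ => (M : ℝ)⁻¹ * ∑ m ∈ range M, f (W m ω)) atTop
      (𝓝 (∫ x, f x ∂ν)) := by
  have hint0 : Integrable (fun ω => f (W 0 ω)) P :=
    (integrable_map_measure hf.aestronglyMeasurable (hW 0).aemeasurable).1 (hlaw 0 ▸ hint)
  have hident : ∀ m, IdentDistrib (fun ω => f (W m ω)) (fun ω => f (W 0 ω)) P P := fun m =>
    IdentDistrib.comp ⟨(hW m).aemeasurable, (hW 0).aemeasurable, (hlaw m).trans (hlaw 0).symm⟩ hf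
  rw [← hlaw 0, integral_map (hW 0).aemeasurable hf.aestronglyMeasurable]
  simpa using strong_law_ae (fun m ω => f (W m ω)) hint0
    (fun m m' hmm' => (hindep.indepFun hmm').comp hf hf) hident

lemma measurableSet_exists_abs_le {α ι : Type*} [MeasurableSpace α] (s : Finset ι)
    {φ κ : ι → α → ℝ} (hφ : ∀ i, Measurable (φ i)) (hκ : ∀ i, Measurable (κ i)) (q : ℝ) :
    MeasurableSet {x | ∃ i ∈ s, |φ i x| ≤ q * κ i x} := by
  have hunion : {x | ∃ i ∈ s, |φ i x| ≤ q * κ i x} = ⋃ i ∈ s, {x | |φ i x| ≤ q * κ i x} := by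
    ext; simp
  rw [hunion]
  exact s.measurableSet_biUnion fun i _ => measurableSet_le (hφ i).abs ((hκ i).const_mul q)

lemma tendsto_integral_indicator_exists_abs_le {α ι : Type*} [MeasurableSpace α]
    {μ : Measure α} {s : Finset ι} {φ κ : ι → α → ℝ} {b : α → ℝ} (hφ : ∀ i, Measurable (φ i))
    (hκ : ∀ i, Measurable (κ i)) (hb : Integrable b μ) (hnull : ∀ i ∈ s, μ {x | φ i x = 0} = 0) :
    Tendsto (fun r : ℕ =>
      ∫ x, {x | ∃ i ∈ s, |φ i x| ≤ ((r : ℝ) + 1)⁻¹ * κ i x}.indicator b x ∂μ) atTop (𝓝 0) := by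
  have hq : Tendsto (fun r : ℕ => ((r : ℝ) + 1)⁻¹) atTop (𝓝 0) := by
    simpa only [one_div] using tendsto_one_div_add_atTop_nhds_zero_nat (𝕜 := ℝ)
  have hoff : ∀ᵐ x ∂μ, ∀ i ∈ s, φ i x ≠ 0 :=
    (eventually_all_finset s).2 fun i hi => ae_iff.2 (by simpa using hnull i hi)
  rw [← integral_zero α ℝ]
  refine tendsto_integral_of_dominated_convergence (fun x => ‖b x‖)
    (fun r => hb.aestronglyMeasurable.indicator (measurableSet_exists_abs_le s hφ hκ _)) hb.norm
    (fun r => ae_of_all _ fun x => norm_indicator_le_norm_self _ _) (hoff.mono fun x hx => ?_)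
  -- off the null sets, `x` eventually leaves the shrinking sets
  refine tendsto_const_nhds.congr' ?_
  filter_upwards [(eventually_all_finset s).2 fun i hi => (hq.mul_const (κ i x)).eventually
    (gt_mem_nhds (by rw [zero_mul]; exact abs_pos.2 (hx i hi)))] with r hr
  rw [Set.indicator_of_notMem]
  simpa using hr

section PolicyIteration

variable {n d p N : ℕ} {σ : ℕ → ℕ}

lemma mfact_pos (α : Fin n → Fin d → ℕ) : 0 < mfact α :=
  prod_pos fun _ _ => prod_pos fun _ _ => Nat.factorial_pos _

lemma polF_congr_payoff {l : ℕ → (Fin n → Fin d → ℕ) → ℝ} {z z' : ℕ → ℝ}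
    {g : Fin n → Fin d → ℝ} (h : ∀ i ≤ N, z i = z' i) (m : ℕ) :
    polF n d p N σ l z g m = polF n d p N σ l z' g m := by
  induction m with
  | zero => simp only [polF, h N le_rfl]
  | succ m ih => simp only [polF, h (N - (m + 1)) (Nat.sub_le _ _), ih]

lemma polF_congr_coeff {l l' : ℕ → (Fin n → Fin d → ℕ) → ℝ} {z : ℕ → ℝ}
    {g : Fin n → Fin d → ℝ} {m : ℕ} (h : ∀ i, N - m ≤ i → i ≤ N - 1 → l i = l' i) :
    polF n d p N σ l z g m = polF n d p N σ l' z g m := by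
  induction m with
  | zero => rfl
  | succ m ih =>
    simp only [polF, h (N - (m + 1)) le_rfl (by omega), ih fun i h₁ h₂ => h i (by omega) h₂]

lemma abs_polF_le {l : ℕ → (Fin n → Fin d → ℕ) → ℝ} {z : ℕ → ℝ} {g : Fin n → Fin d → ℝ}
    {c : ℝ} (hz : ∀ i ≤ N, |z i| ≤ c) (m : ℕ) : |polF n d p N σ l z g m| ≤ c := by
  induction m with
  | zero => exact hz N le_rfl
  | succ m ih =>
    simp only [polF]
    split_ifs
    exacts [hz _ (Nat.sub_le _ _), ih]

lemma polF_eq_of_abs_sub_lt {l Λ : ℕ → (Fin n → Fin d → ℕ) → ℝ} {z : ℕ → ℝ}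
    {g : Fin n → Fin d → ℝ} {m : ℕ}
    (h : ∀ i, N - m ≤ i → i ≤ N - 1 →
      |chaosEval n d p (σ i) (l i) g - chaosEval n d p (σ i) (Λ i) g| <
        |z i - chaosEval n d p (σ i) (Λ i) g|) :
    polF n d p N σ l z g m = polF n d p N σ Λ z g m := by
  induction m with
  | zero => rfl
  | succ m ih =>
    simp only [polF, le_iff_le_of_abs_sub_lt (h (N - (m + 1)) le_rfl (by omega)),
      ih fun i h₁ h₂ => h i (by omega) h₂]

variable {zs zs' : ℕ → ℕ → ℝ} {gs : ℕ → Fin n → Fin d → ℝ} {M : ℕ}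

lemma lamHatAux_eq_of_le {j j' k : ℕ} (hj : j ≤ j') (hk : N - 1 - j < k) :
    lamHatAux n d p N σ zs gs M j' k = lamHatAux n d p N σ zs gs M j k := by
  induction j', hj using Nat.le_induction with
  | base => rfl
  | succ j' hj ih =>
    funext α
    rw [← ih]
    exact if_neg (by omega)

lemma lamHat_apply {k : ℕ} (hk₁ : 1 ≤ k) (hk : k ≤ N - 1) (α : Fin n → Fin d → ℕ) :
    lamHat n d p N σ zs gs M k α =
      ((M : ℝ) * mfact α)⁻¹ * ∑ m ∈ range M,
        polF n d p N σ (lamHat n d p N σ zs gs M) (zs m) (gs m) (N - (k + 1)) *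
          hermiteProd α (gs m) := by
  have hlater : ∀ i, N - (N - (k + 1)) ≤ i → i ≤ N - 1 →
      lamHatAux n d p N σ zs gs M (N - 1 - k) i = lamHat n d p N σ zs gs M i :=
    fun i h₁ h₂ => (lamHatAux_eq_of_le (by omega) (by omega)).symm
  have hk' : lamHat n d p N σ zs gs M k = lamHatAux n d p N σ zs gs M (N - 1 - k + 1) k :=
    lamHatAux_eq_of_le (by omega) (by omega)
  rw [hk']
  simp only [lamHatAux, if_pos (show k = N - 1 - (N - 1 - k) by omega),
    polF_congr_coeff hlater]

lemma lamHat_congr_payoff (h : ∀ m, ∀ i ≤ N, zs m i = zs' m i) :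
    lamHat n d p N σ zs gs = lamHat n d p N σ zs' gs := by
  suffices ∀ M j, lamHatAux n d p N σ zs gs M j = lamHatAux n d p N σ zs' gs M j by
    funext M
    exact this M _
  intro M j
  induction j with
  | zero => rfl
  | succ j ih => simp only [lamHatAux, ih, polF_congr_payoff (h _)]

end PolicyIteration

section Samples

variable {n d p N : ℕ}

/-- A sample `(z, g)` of the payoffs `Z_{T_0}, …, Z_{T_N}` and the Gaussian increments. -/
abbrev PathSample (N n d : ℕ) : Type := (Fin (N + 1) → ℝ) × (Fin n → Fin d → ℝ)

/-- `polF` reads payoffs as sequences on `ℕ`; only the values at `0, …, N` matter. -/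
def extendByZero (N : ℕ) (z : Fin (N + 1) → ℝ) (i : ℕ) : ℝ :=
  if h : i < N + 1 then z ⟨i, h⟩ else 0

lemma extendByZero_of_le {z : Fin (N + 1) → ℝ} {i : ℕ} (hi : i ≤ N) :
    extendByZero N z i = z ⟨i, Nat.lt_succ_of_le hi⟩ :=
  dif_pos _

lemma polF_extendByZero {σ : ℕ → ℕ} (l : ℕ → (Fin n → Fin d → ℕ) → ℝ) (z : ℕ → ℝ)
    (g : Fin n → Fin d → ℝ) (m : ℕ) :
    polF n d p N σ l (extendByZero N fun k : Fin (N + 1) => z k) g m = polF n d p N σ l z g m :=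
  polF_congr_payoff (fun _ hi => extendByZero_of_le hi) m

lemma lamHat_extendByZero {σ : ℕ → ℕ} (zs : ℕ → ℕ → ℝ) (gs : ℕ → Fin n → Fin d → ℝ) :
    lamHat n d p N σ (fun m => extendByZero N fun k : Fin (N + 1) => zs m k) gs =
      lamHat n d p N σ zs gs :=
  lamHat_congr_payoff fun _ _ hi => extendByZero_of_le hi

lemma abs_extendByZero_le_norm (z : Fin (N + 1) → ℝ) {i : ℕ} (hi : i ≤ N) :
    |extendByZero N z i| ≤ ‖z‖ := by
  rw [extendByZero_of_le hi, ← Real.norm_eq_abs]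
  exact norm_le_pi_norm z _

lemma measurable_extendByZero (i : ℕ) :
    Measurable fun z : Fin (N + 1) → ℝ => extendByZero N z i := by
  unfold extendByZero
  split_ifs
  exacts [measurable_pi_apply _, measurable_const]

lemma continuous_hermiteProd (α : Fin n → Fin d → ℕ) : Continuous (hermiteProd α) :=
  continuous_finsetProd _ fun j _ => continuous_finsetProd _ fun i _ =>
    (Polynomial.hermite _).continuous_aeval.comp ((continuous_apply j).comp (continuous_apply i))

lemma continuous_chaosEval (s : ℕ) (l : (Fin n → Fin d → ℕ) → ℝ) :
    Continuous (chaosEval n d p s l) :=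
  continuous_finsetSum _ fun β _ => continuous_const.mul (continuous_hermiteProd β)

lemma abs_chaosEval_sub_le_s12 {s : ℕ} {l l' : (Fin n → Fin d → ℕ) → ℝ} {q : ℝ}
    (h : ∀ β ∈ idxSet n d p s, |l β - l' β| ≤ q) (g : Fin n → Fin d → ℝ) :
    |chaosEval n d p s l g - chaosEval n d p s l' g| ≤
      q * ∑ β ∈ idxSet n d p s, |hermiteProd β g| := by
  rw [chaosEval, chaosEval, ← sum_sub_distrib, mul_sum]
  refine (abs_sum_le_sum_abs _ _).trans (sum_le_sum fun β hβ => ?_)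
  rw [← sub_mul, abs_mul]
  exact mul_le_mul_of_nonneg_right (h β hβ) (abs_nonneg _)

variable (p) (σ : ℕ → ℕ)

/-- The cash flow `F_{k+1}(l, z, g)` collected after date `T_k` under the policy with
coefficients `l`. -/
def cashFlow (l : ℕ → (Fin n → Fin d → ℕ) → ℝ) (k : ℕ) (e : PathSample N n d) : ℝ :=
  polF n d p N σ l (extendByZero N e.1) e.2 (N - (k + 1))

/-- Samples at which some exercise decision after `T_k` may change when the coefficients of
`Λ` are moved by at most `q`. -/
def flipSet (Λ : ℕ → (Fin n → Fin d → ℕ) → ℝ) (k : ℕ) (q : ℝ) : Set (PathSample N n d) :=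
  {e | ∃ i ∈ Icc (k + 1) (N - 1), |extendByZero N e.1 i - chaosEval n d p (σ i) (Λ i) e.2| ≤
    q * ∑ β ∈ idxSet n d p (σ i), |hermiteProd β e.2|}

variable {p σ}

lemma measurable_cashFlow (l : ℕ → (Fin n → Fin d → ℕ) → ℝ) (k : ℕ) :
    Measurable (cashFlow (N := N) p σ l k) := by
  unfold cashFlow
  generalize N - (k + 1) = m
  induction m with
  | zero => exact (measurable_extendByZero N).comp measurable_fst
  | succ m ih =>
    exact Measurable.ite (measurableSet_le ((continuous_chaosEval _ _).measurable.comp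
      measurable_snd) ((measurable_extendByZero _).comp measurable_fst))
      ((measurable_extendByZero _).comp measurable_fst) ih

lemma abs_cashFlow_le (l : ℕ → (Fin n → Fin d → ℕ) → ℝ) (k : ℕ) (e : PathSample N n d) :
    |cashFlow p σ l k e| ≤ ‖e.1‖ :=
  abs_polF_le (fun _ hi => abs_extendByZero_le_norm e.1 hi) _

lemma abs_cashFlow_mul_sub_le_indicator {l Λ : ℕ → (Fin n → Fin d → ℕ) → ℝ} {k : ℕ}
    (hk : k < N) {q : ℝ} (hl : ∀ i ∈ Icc (k + 1) (N - 1), ∀ β ∈ idxSet n d p (σ i),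
      |l i β - Λ i β| ≤ q) (α : Fin n → Fin d → ℕ) (e : PathSample N n d) :
    |cashFlow p σ l k e * hermiteProd α e.2 - cashFlow p σ Λ k e * hermiteProd α e.2| ≤
      (flipSet p σ Λ k q).indicator (fun e => 2 * (‖e.1‖ * |hermiteProd α e.2|)) e := by
  by_cases he : e ∈ flipSet p σ Λ k q
  · rw [Set.indicator_of_mem he, ← sub_mul, abs_mul, ← mul_assoc, two_mul]
    gcongr
    exact (abs_sub _ _).trans (add_le_add (abs_cashFlow_le _ _ _) (abs_cashFlow_le _ _ _))
  · have hfar : ∀ i ∈ Icc (k + 1) (N - 1), q * ∑ β ∈ idxSet n d p (σ i), |hermiteProd β e.2| <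
        |extendByZero N e.1 i - chaosEval n d p (σ i) (Λ i) e.2| := by
      simpa [flipSet] using he
    have hsame : cashFlow p σ l k e = cashFlow p σ Λ k e :=
      polF_eq_of_abs_sub_lt fun i h₁ h₂ => (abs_chaosEval_sub_le_s12 (hl i
        (mem_Icc.2 ⟨by omega, h₂⟩)) _).trans_lt (hfar i (mem_Icc.2 ⟨by omega, h₂⟩))
    rw [Set.indicator_of_notMem he, hsame, sub_self, abs_zero]

lemma tendsto_lamHat_of_tendsto_later {Λ : ℕ → (Fin n → Fin d → ℕ) → ℝ}
    {w : ℕ → PathSample N n d} {k : ℕ} (hk₁ : 1 ≤ k) (hk : k ≤ N - 1) {α : Fin n → Fin d → ℕ}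
    {c : ℕ → ℝ} (hmain : Tendsto (fun M : ℕ => (M : ℝ)⁻¹ * ∑ m ∈ range M,
      cashFlow p σ Λ k (w m) * hermiteProd α (w m).2) atTop (𝓝 (mfact α * Λ k α)))
    (hflip : ∀ r : ℕ, Tendsto (fun M : ℕ => (M : ℝ)⁻¹ * ∑ m ∈ range M,
      (flipSet p σ Λ k ((r : ℝ) + 1)⁻¹).indicator
        (fun e => 2 * (‖e.1‖ * |hermiteProd α e.2|)) (w m)) atTop (𝓝 (c r)))
    (hc : Tendsto c atTop (𝓝 0))
    (hlater : ∀ i ∈ Icc (k + 1) (N - 1), ∀ β ∈ idxSet n d p (σ i),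
      Tendsto (fun M => lamHat n d p N σ (fun m => extendByZero N (w m).1) (fun m => (w m).2) M
        i β) atTop (𝓝 (Λ i β))) :
    Tendsto (fun M => lamHat n d p N σ (fun m => extendByZero N (w m).1) (fun m => (w m).2) M
      k α) atTop (𝓝 (Λ k α)) := by
  have hclose (r : ℕ) : ∀ᶠ M in atTop, ∀ i ∈ Icc (k + 1) (N - 1), ∀ β ∈ idxSet n d p (σ i),
      |lamHat n d p N σ (fun m => extendByZero N (w m).1) (fun m => (w m).2) M i β - Λ i β| ≤
        ((r : ℝ) + 1)⁻¹ :=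
    (eventually_all_finset _).2 fun i hi => (eventually_all_finset _).2 fun β hβ =>
      hlater i hi β hβ (Metric.closedBall_mem_nhds _ (by positivity))
  have hfact : (mfact α : ℝ) ≠ 0 := Nat.cast_ne_zero.2 (mfact_pos α).ne'
  have hlim := (tendsto_average_of_eventually_abs_sub_le hmain hflip hc fun r =>
    (hclose r).mono fun M hM m => abs_cashFlow_mul_sub_le_indicator (by omega) hM α (w m)).const_mul
      (mfact α : ℝ)⁻¹
  rw [inv_mul_cancel_left₀ hfact] at hlim
  refine hlim.congr fun M => ?_
  simp only [lamHat_apply hk₁ hk, mul_inv, cashFlow]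
  ring

end Samples

section Convergence

variable [MeasurableSpace Ω] {P : Measure Ω} [IsProbabilityMeasure P] {n d p N : ℕ}
  {σ : ℕ → ℕ} {ν : Measure (PathSample N n d)} {W : ℕ → Ω → PathSample N n d}
  {Λ : ℕ → (Fin n → Fin d → ℕ) → ℝ}

lemma ae_tendsto_lamHat_of_ae_tendsto_later (hW : ∀ m, Measurable (W m)) (hiid : iIndepFun W P)
    (hlaw : ∀ m, P.map (W m) = ν) {k : ℕ} (hk₁ : 1 ≤ k) (hk : k ≤ N - 1)
    {α : Fin n → Fin d → ℕ} (hint : Integrable (fun e => ‖e.1‖ * |hermiteProd α e.2|) ν)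
    (hΛ : Λ k α = (mfact α : ℝ)⁻¹ * ∫ e, cashFlow p σ Λ k e * hermiteProd α e.2 ∂ν)
    (hND : ∀ i ∈ Icc (k + 1) (N - 1),
      ν {e | extendByZero N e.1 i = chaosEval n d p (σ i) (Λ i) e.2} = 0)
    (hlater : ∀ i ∈ Icc (k + 1) (N - 1), ∀ β ∈ idxSet n d p (σ i), ∀ᵐ ω ∂P,
      Tendsto (fun M => lamHat n d p N σ (fun m => extendByZero N (W m ω).1)
        (fun m => (W m ω).2) M i β) atTop (𝓝 (Λ i β))) :
    ∀ᵐ ω ∂P, Tendsto (fun M => lamHat n d p N σ (fun m => extendByZero N (W m ω).1)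
      (fun m => (W m ω).2) M k α) atTop (𝓝 (Λ k α)) := by
  set b : PathSample N n d → ℝ := fun e => 2 * (‖e.1‖ * |hermiteProd α e.2|)
  set Y : ℕ → PathSample N n d → ℝ := fun r => (flipSet p σ Λ k ((r : ℝ) + 1)⁻¹).indicator b
  have hf : Measurable fun e : PathSample N n d => cashFlow p σ Λ k e * hermiteProd α e.2 :=
    (measurable_cashFlow Λ k).mul ((continuous_hermiteProd α).measurable.comp measurable_snd)
  have hfint : Integrable (fun e => cashFlow p σ Λ k e * hermiteProd α e.2) ν :=
    hint.mono' hf.aestronglyMeasurable (ae_of_all _ fun e => by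
      rw [Real.norm_eq_abs, abs_mul]
      gcongr
      exact abs_cashFlow_le _ _ _)
  have hφ (i : ℕ) : Measurable fun e : PathSample N n d =>
      extendByZero N e.1 i - chaosEval n d p (σ i) (Λ i) e.2 :=
    ((measurable_extendByZero i).comp measurable_fst).sub
      ((continuous_chaosEval _ _).measurable.comp measurable_snd)
  have hκ (i : ℕ) : Measurable fun e : PathSample N n d =>
      ∑ β ∈ idxSet n d p (σ i), |hermiteProd β e.2| :=
    (continuous_finsetSum _ fun β _ => (continuous_hermiteProd β).abs).measurable.comp
      measurable_snd
  have hflip (q : ℝ) : MeasurableSet (flipSet p σ Λ k q) := measurableSet_exists_abs_le _ hφ hκ q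
  have hb : Measurable b := (((continuous_norm.comp continuous_fst).mul
    ((continuous_hermiteProd α).comp continuous_snd).abs).const_mul 2).measurable
  have hmain := ae_tendsto_average_of_iIndepFun hW hiid hlaw hf hfint
  rw [← mul_inv_cancel_left₀ (Nat.cast_ne_zero.2 (mfact_pos α).ne') (∫ e, _ ∂ν), ← hΛ] at hmain
  have hY : ∀ᵐ ω ∂P, ∀ r, Tendsto (fun M : ℕ => (M : ℝ)⁻¹ * ∑ m ∈ range M, Y r (W m ω)) atTop
      (𝓝 (∫ e, Y r e ∂ν)) := ae_all_iff.2 fun r => ae_tendsto_average_of_iIndepFun hW hiid hlaw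
    (hb.indicator (hflip _)) ((hint.const_mul 2).indicator (hflip _))
  have hYlim : Tendsto (fun r => ∫ e, Y r e ∂ν) atTop (𝓝 0) :=
    tendsto_integral_indicator_exists_abs_le hφ hκ (hint.const_mul 2) fun i hi => by
      simpa only [sub_eq_zero] using hND i hi
  have hlater' := (eventually_all_finset _).2 fun i hi => (eventually_all_finset _).2 (hlater i hi)
  filter_upwards [hmain, hY, hlater'] with ω hmainω hYω hlaterω
  exact tendsto_lamHat_of_tendsto_later hk₁ hk hmainω hYω hYlim hlaterω

theorem ae_tendsto_lamHat_of_iIndepFun (hW : ∀ m, Measurable (W m)) (hiid : iIndepFun W P)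
    (hlaw : ∀ m, P.map (W m) = ν)
    (hint : ∀ α : Fin n → Fin d → ℕ, Integrable (fun e => ‖e.1‖ * |hermiteProd α e.2|) ν)
    (hΛ : ∀ k, 1 ≤ k → k ≤ N - 1 → ∀ α ∈ idxSet n d p (σ k),
      Λ k α = (mfact α : ℝ)⁻¹ * ∫ e, cashFlow p σ Λ k e * hermiteProd α e.2 ∂ν)
    (hND : ∀ k, 1 ≤ k → k ≤ N - 1 →
      ν {e | extendByZero N e.1 k = chaosEval n d p (σ k) (Λ k) e.2} = 0)
    {k : ℕ} (hk₁ : 1 ≤ k) (hk : k ≤ N - 1) {α : Fin n → Fin d → ℕ} (hα : α ∈ idxSet n d p (σ k)) :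
    ∀ᵐ ω ∂P, Tendsto (fun M => lamHat n d p N σ (fun m => extendByZero N (W m ω).1)
      (fun m => (W m ω).2) M k α) atTop (𝓝 (Λ k α)) := by
  induction hj : N - 1 - k using Nat.strong_induction_on generalizing k α with
  | _ j ih =>
    refine ae_tendsto_lamHat_of_ae_tendsto_later hW hiid hlaw hk₁ hk (hint α) (hΛ k hk₁ hk α hα)
      (fun i hi => ?_) fun i hi β hβ => ?_ <;> obtain ⟨hi₁, hi₂⟩ := mem_Icc.1 hi
    exacts [hND i (by omega) hi₂, ih (N - 1 - i) (by omega) (by omega) hi₂ hβ rfl]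

end Convergence

namespace IsBrownian

variable [MeasurableSpace Ω] {P : Measure Ω} {d : ℕ} {B : ℝ → Ω → Fin d → ℝ}

lemma natFilt_le (hB : IsBrownian P d B) (t : ℝ) : natFilt B t ≤ ‹MeasurableSpace Ω› :=
  iSup_le fun s => (hB.meas s).comap_le

lemma measurable_gridIncr (hB : IsBrownian P d B) {n : ℕ} (t : Fin (n + 1) → ℝ) (i : Fin n)
    (j : Fin d) : Measurable fun ω => gridIncr B t i ω j :=
  (((measurable_pi_apply j).comp (hB.meas _)).sub
    ((measurable_pi_apply j).comp (hB.meas _))).div_const _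

lemma map_gridIncr (hB : IsBrownian P d B) {n : ℕ} {t : Fin (n + 1) → ℝ} (ht0 : t 0 = 0)
    (hmono : StrictMono t) (i : Fin n) (j : Fin d) :
    P.map (fun ω => gridIncr B t i ω j) = gaussianReal 0 1 := by
  have hΔ : 0 < t i.succ - t i.castSucc := sub_pos.2 (hmono Fin.castSucc_lt_succ)
  have hinc : Measurable fun ω => B (t i.succ) ω j - B (t i.castSucc) ω j :=
    ((measurable_pi_apply j).comp (hB.meas _)).sub ((measurable_pi_apply j).comp (hB.meas _))
  have hcomp : (fun ω => gridIncr B t i ω j) = (fun x => (√(t i.succ - t i.castSucc))⁻¹ * x) ∘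
      fun ω => B (t i.succ) ω j - B (t i.castSucc) ω j := by
    funext ω
    simp only [gridIncr, Function.comp_apply, div_eq_inv_mul]
  rw [hcomp, ← Measure.map_map (measurable_const_mul _) hinc,
    hB.gauss _ _ (ht0 ▸ hmono.monotone (Fin.zero_le _)) (hmono Fin.castSucc_lt_succ).le j,
    gaussianReal_map_const_mul, mul_zero]
  congr 1
  ext
  simp [Real.coe_toNNReal _ hΔ.le, Real.sq_sqrt hΔ.le, hΔ.ne']

end IsBrownian

section LawOfSample

variable [MeasurableSpace Ω] {P : Measure Ω} {n d p N : ℕ} {σ : ℕ → ℕ} {Z : ℕ → Ω → ℝ}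
  {G : Ω → Fin n → Fin d → ℝ}

variable (N) in
def pathSample (Z : ℕ → Ω → ℝ) (G : Ω → Fin n → Fin d → ℝ) (ω : Ω) : PathSample N n d :=
  (fun k : Fin (N + 1) => Z k ω, G ω)

lemma measurable_pathSample (hZ : ∀ k ≤ N, Measurable (Z k)) (hG : Measurable G) :
    Measurable (pathSample N Z G) :=
  (measurable_pi_lambda _ fun k : Fin (N + 1) => hZ k (Nat.lt_succ_iff.1 k.2)).prodMk hG

lemma integral_cashFlow_mul_map (hX : Measurable (pathSample N Z G))
    (l : ℕ → (Fin n → Fin d → ℕ) → ℝ) (k : ℕ) (α : Fin n → Fin d → ℕ) :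
    ∫ e, cashFlow p σ l k e * hermiteProd α e.2 ∂(P.map (pathSample N Z G)) =
      ∫ ω, polF n d p N σ l (fun i => Z i ω) (G ω) (N - (k + 1)) * hermiteProd α (G ω) ∂P := by
  rw [integral_map (f := fun e => cashFlow p σ l k e * hermiteProd α e.2) hX.aemeasurable
    ((measurable_cashFlow l k).mul ((continuous_hermiteProd α).measurable.comp
      measurable_snd)).aestronglyMeasurable]
  refine integral_congr_ae (ae_of_all _ fun ω => ?_)
  simp only [cashFlow, pathSample, polF_extendByZero _ (fun i => Z i ω)]

lemma map_pathSample_setOf_eq (hX : Measurable (pathSample N Z G)) {k : ℕ} (hk : k ≤ N)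
    (l : (Fin n → Fin d → ℕ) → ℝ) (s : ℕ) :
    P.map (pathSample N Z G) {e | extendByZero N e.1 k = chaosEval n d p s l e.2} =
      P {ω | Z k ω = chaosEval n d p s l (G ω)} := by
  have hset :
      MeasurableSet {e : PathSample N n d | extendByZero N e.1 k = chaosEval n d p s l e.2} :=
    measurableSet_eq_fun ((measurable_extendByZero k).comp measurable_fst)
      ((continuous_chaosEval _ _).measurable.comp measurable_snd)
  rw [Measure.map_apply hX hset]
  simp [pathSample, extendByZero_of_le hk]

lemma integrable_norm_mul_abs_hermiteProd_map [IsFiniteMeasure P]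
    (hX : Measurable (pathSample N Z G)) (hZ2 : MemLp (fun ω => ⨆ k : Fin (N + 1), |Z k ω|) 2 P)
    (hG : ∀ i j, Measurable fun ω => G ω i j)
    (hgauss : ∀ i j, P.map (fun ω => G ω i j) = gaussianReal 0 1) (β : Fin n → Fin d → ℕ) :
    Integrable (fun e => ‖e.1‖ * |hermiteProd β e.2|) (P.map (pathSample N Z G)) := by
  refine (integrable_map_measure ((continuous_norm.comp continuous_fst).mul
    ((continuous_hermiteProd β).comp continuous_snd).abs).aestronglyMeasurable
    hX.aemeasurable).2 ?_
  have hnorm : MemLp (fun ω => ‖fun k : Fin (N + 1) => Z k ω‖) 2 P := by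
    simpa only [iSup_abs_eq_norm] using hZ2
  exact hnorm.integrable_mul (memLp_hermiteProd hG hgauss β (q := 2) (by simp)).norm

end LawOfSample

theorem lamHat_converges_as_general
    {Ω : Type*} [MeasurableSpace Ω] (P : Measure Ω) [IsProbabilityMeasure P]
    {d n : ℕ} (B : ℝ → Ω → Fin d → ℝ) (hB : IsBrownian P d B)
    (N : ℕ) (TT : ℕ → ℝ)
    (t : Fin (n + 1) → ℝ) (ht0 : t 0 = 0)
    (hmono : StrictMono t) (p : ℕ) (σ : ℕ → ℕ)
    (Z : ℕ → Ω → ℝ)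
    (hZad : ∀ k ≤ N, Measurable[natFilt B (TT k)] (Z k))
    (hZ2 : MemLp (fun ω => ⨆ k : Fin (N + 1), |Z k ω|) 2 P)
    (Zs : ℕ → ℕ → Ω → ℝ) (Gs : ℕ → Fin n → Ω → Fin d → ℝ)
    (hMeas : ∀ m : ℕ, Measurable (fun ω =>
      (((fun k : Fin (N + 1) => Zs m k ω), fun i j => Gs m i ω j) :
        (Fin (N + 1) → ℝ) × (Fin n → Fin d → ℝ))))
    (hiid : iIndepFun
      (fun (m : ℕ) => fun ω =>
        (((fun k : Fin (N + 1) => Zs m k ω), fun i j => Gs m i ω j) :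
          (Fin (N + 1) → ℝ) × (Fin n → Fin d → ℝ))) P)
    (hlaw : ∀ m : ℕ,
      P.map (fun ω =>
        (((fun k : Fin (N + 1) => Zs m k ω), fun i j => Gs m i ω j) :
          (Fin (N + 1) → ℝ) × (Fin n → Fin d → ℝ))) =
      P.map (fun ω =>
        (((fun k : Fin (N + 1) => Z k ω), fun i j => gridIncr B t i ω j) :
          (Fin (N + 1) → ℝ) × (Fin n → Fin d → ℝ))))
    (Λ : ℕ → (Fin n → Fin d → ℕ) → ℝ)
    (hΛ : ∀ k : ℕ, 1 ≤ k → k ≤ N - 1 → ∀ α ∈ idxSet n d p (σ k),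
      Λ k α = ((mfact α : ℝ))⁻¹ *
        ∫ ω, polF n d p N σ Λ (fun i => Z i ω) (fun i j => gridIncr B t i ω j)
            (N - (k + 1)) * hermiteProd α (fun i j => gridIncr B t i ω j) ∂P)
    (hND : ∀ k : ℕ, 1 ≤ k → k ≤ N - 1 →
      P {ω | Z k ω = chaosEval n d p (σ k) (Λ k) (fun i j => gridIncr B t i ω j)} = 0) :
    ∀ k : ℕ, 1 ≤ k → k ≤ N - 1 → ∀ α ∈ idxSet n d p (σ k),
      ∀ᵐ ω ∂P, Filter.Tendsto
        (fun M : ℕ =>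
          lamHat n d p N σ (fun m i => Zs m i ω) (fun m i j => Gs m i ω j) M k α)
        Filter.atTop (nhds (Λ k α)) := by
  intro k hk₁ hk α hα
  have hG : Measurable fun ω i j => gridIncr B t i ω j :=
    measurable_pi_lambda _ fun i => measurable_pi_lambda _ (hB.measurable_gridIncr t i)
  have hX := measurable_pathSample (N := N)
    (fun k hk => (hZad k hk).mono (hB.natFilt_le _) le_rfl) hG
  have hlim := ae_tendsto_lamHat_of_iIndepFun (Λ := Λ)
    (ν := P.map (pathSample N Z fun ω i j => gridIncr B t i ω j)) hMeas hiid hlaw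
    (integrable_norm_mul_abs_hermiteProd_map hX hZ2 (hB.measurable_gridIncr t)
      (hB.map_gridIncr ht0 hmono))
    (fun k hk₁ hk α hα => by rw [integral_cashFlow_mul_map hX, hΛ k hk₁ hk α hα])
    (fun k hk₁ hk => by rw [map_pathSample_setOf_eq hX (by omega), hND k hk₁ hk]) hk₁ hk hα
  filter_upwards [hlim] with ω hω
  rwa [lamHat_extendByZero (fun m i => Zs m i ω)] at hω

/-- Almost sure convergence of the Monte-Carlo chaos coefficients of the backward
policy iteration: under the non-degeneracy assumption `ℙ(Z_{T_k} = C_{p,n|σ_k}(λ_k)) = 0`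
for every `k`, the estimators `λ̂_k^M` converge to the exact coefficients `λ_k`
almost surely as `M → ∞`, for every `k = 1,…,N−1`. -/
theorem lamHat_converges_as
    {Ω : Type*} [MeasurableSpace Ω] (P : Measure Ω) [IsProbabilityMeasure P]
    {d n : ℕ} (Thor : ℝ) (hT : 0 < Thor) (B : ℝ → Ω → Fin d → ℝ) (hB : IsBrownian P d B)
    (N : ℕ) (hN : 1 ≤ N) (TT : ℕ → ℝ)
    (hTT0 : TT 0 = 0) (hTTN : TT N = Thor) (hTT01 : TT 0 ≤ TT 1)
    (hTTmono : ∀ i j : ℕ, 1 ≤ i → i < j → j ≤ N → TT i < TT j)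
    (t : Fin (n + 1) → ℝ) (ht0 : t 0 = 0) (htT : t (Fin.last n) = Thor)
    (hmono : StrictMono t) (p : ℕ) (σ : ℕ → ℕ)
    (hσ : ∀ k : ℕ, 1 ≤ k → k ≤ N → ∃ h : σ k ≤ n, t ⟨σ k, Nat.lt_succ_of_le h⟩ = TT k)
    (Z : ℕ → Ω → ℝ)
    (hZad : ∀ k ≤ N, Measurable[natFilt B (TT k)] (Z k))
    (hZ2 : MemLp (fun ω => ⨆ k : Fin (N + 1), |Z k ω|) 2 P)
    (Zs : ℕ → ℕ → Ω → ℝ) (Gs : ℕ → Fin n → Ω → Fin d → ℝ)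
    (hMeas : ∀ m : ℕ, Measurable (fun ω =>
      (((fun k : Fin (N + 1) => Zs m k ω), fun i j => Gs m i ω j) :
        (Fin (N + 1) → ℝ) × (Fin n → Fin d → ℝ))))
    (hiid : iIndepFun
      (fun (m : ℕ) => fun ω =>
        (((fun k : Fin (N + 1) => Zs m k ω), fun i j => Gs m i ω j) :
          (Fin (N + 1) → ℝ) × (Fin n → Fin d → ℝ))) P)
    (hlaw : ∀ m : ℕ,
      P.map (fun ω =>
        (((fun k : Fin (N + 1) => Zs m k ω), fun i j => Gs m i ω j) :
          (Fin (N + 1) → ℝ) × (Fin n → Fin d → ℝ))) =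
      P.map (fun ω =>
        (((fun k : Fin (N + 1) => Z k ω), fun i j => gridIncr B t i ω j) :
          (Fin (N + 1) → ℝ) × (Fin n → Fin d → ℝ))))
    (Λ : ℕ → (Fin n → Fin d → ℕ) → ℝ)
    (hΛ : ∀ k : ℕ, 1 ≤ k → k ≤ N - 1 → ∀ α ∈ idxSet n d p (σ k),
      Λ k α = ((mfact α : ℝ))⁻¹ *
        ∫ ω, polF n d p N σ Λ (fun i => Z i ω) (fun i j => gridIncr B t i ω j)
            (N - (k + 1)) * hermiteProd α (fun i j => gridIncr B t i ω j) ∂P)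
    (hND : ∀ k : ℕ, 1 ≤ k → k ≤ N - 1 →
      P {ω | Z k ω = chaosEval n d p (σ k) (Λ k) (fun i j => gridIncr B t i ω j)} = 0) :
    ∀ k : ℕ, 1 ≤ k → k ≤ N - 1 → ∀ α ∈ idxSet n d p (σ k),
      ∀ᵐ ω ∂P, Filter.Tendsto
        (fun M : ℕ =>
          lamHat n d p N σ (fun m i => Zs m i ω) (fun m i j => Gs m i ω j) M k α)
        Filter.atTop (nhds (Λ k α)) :=
  lamHat_converges_as_general P B hB N TT t ht0 hmono p σ Z hZad hZ2 Zs Gs hMeas hiid hlaw Λ hΛ hND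

end
end
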